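/- Let r > 0 and any integer n ≥ 1. For all integers i with 1 ≤ i ≤ n−1, (i+1)·(i+1)^r/(i+2)^r ≤ 1 + i·(i/(i+1))^r. -/
import Mathlib


theorem condition_prime_for_integers (r : ℝ) (hr : 0 < r) (n : ℕ) (hn : 1 ≤ n)
    (i : ℕ) (hi1 : 1 ≤ i) (hi2 : i ≤ n - 1) :
    ((i : ℝ) + 1) * ((i : ℝ) + 1) ^ r / ((i : ℝ) + 2) ^ r ≤
      1 + (i : ℝ) * ((i : ℝ) / ((i : ℝ) + 1)) ^ r := by
  set x : ℝ := (i : ℝ) with hxdef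
  have hx : (1 : ℝ) ≤ x := by rw [hxdef]; exact_mod_cast hi1
  have hx0 : 0 < x := by linarith
  have hx1 : (0 : ℝ) < x + 1 := by linarith
  have hx2 : (0 : ℝ) < x + 2 := by linarith
  set w : ℝ := x / (x + 1) with hwdef
  have hw0 : 0 ≤ w := by positivity
  -- Step B : ((x+1)/x) ^ w ≤ (x+2)/(x+1)  (weighted AM-GM)
  have hB : ((x + 1) / x) ^ w ≤ (x + 2) / (x + 1) := by
    have h := Real.geom_mean_le_arith_mean2_weighted
      (w₁ := w) (w₂ := 1 / (x + 1)) (p₁ := (x + 1) / x) (p₂ := 1)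
      hw0 (by positivity) (by positivity) zero_le_one
      (by rw [hwdef]; field_simp; try ring)
    rw [Real.one_rpow, mul_one] at h
    calc ((x + 1) / x) ^ w ≤ w * ((x + 1) / x) + 1 / (x + 1) * 1 := h
      _ = (x + 2) / (x + 1) := by rw [hwdef]; field_simp; ring
  -- hence (x+1)/(x+2) ≤ (x/(x+1)) ^ w
  have hba : (x + 1) / (x + 2) ≤ (x / (x + 1)) ^ w := by
    have hb : (x / (x + 1) : ℝ) ^ w = (((x + 1) / x) ^ w)⁻¹ := by
      rw [← Real.inv_rpow (by positivity), inv_div]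
    have ha : (x + 1) / (x + 2) = ((x + 2) / (x + 1))⁻¹ := by rw [inv_div]
    rw [hb, ha]
    exact inv_anti₀ (by positivity) hB
  -- raise to the power r
  have hAR : ((x + 1) / (x + 2)) ^ r ≤ ((x / (x + 1)) ^ w) ^ r :=
    Real.rpow_le_rpow (by positivity) hba hr.le
  -- AM-GM on the right-hand side
  have hAM := Real.geom_mean_le_arith_mean2_weighted
    (w₁ := 1 / (x + 1)) (w₂ := w) (p₁ := 1) (p₂ := (x / (x + 1)) ^ r)
    (by positivity) hw0 zero_le_one (by positivity)
    (by rw [hwdef]; field_simp; try ring)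
  rw [Real.one_rpow, one_mul, mul_one] at hAM
  have hswap : ((x / (x + 1)) ^ w) ^ r = ((x / (x + 1)) ^ r) ^ w := by
    rw [← Real.rpow_mul (by positivity), ← Real.rpow_mul (by positivity), mul_comm]
  have hL : (x + 1) * (x + 1) ^ r / (x + 2) ^ r = (x + 1) * ((x + 1) / (x + 2)) ^ r := by
    rw [Real.div_rpow (by positivity) (by positivity), mul_div_assoc]
  rw [hL]
  calc (x + 1) * ((x + 1) / (x + 2)) ^ r
      ≤ (x + 1) * (((x / (x + 1)) ^ r) ^ w) := by
        rw [← hswap]; exact mul_le_mul_of_nonneg_left hAR hx1.le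
    _ ≤ (x + 1) * (1 / (x + 1) + w * (x / (x + 1)) ^ r) :=
        mul_le_mul_of_nonneg_left hAM hx1.le
    _ = 1 + x * (x / (x + 1)) ^ r := by rw [hwdef]; field_simp
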